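/- arXiv:1205.3248 — 4 statements merged into one kernel-verified Lean document; each statement's English description precedes it below -/
import Mathlib

section
/- There exists a universal constant C > 0 such that for all ρ > 0 and 0 < δ < 1, the integral J(ρ,δ) := ∫_{t ∉ [1-δ, 1+δ], t ≥ 0} t^ρ e^{-ρ t} dt satisfies J(ρ,δ) ≤ C · (ρ δ²)^{-1} · exp(-ρ(1 + δ²/4)). -/
/-!
Write `t ^ ρ * exp (-ρ * t) = exp (ρ * (log t - t))`. The exponent is concave with maximum at
`t = 1`, so outside `[1 - δ, 1 + δ]` it lies below its tangent lines at `1 ∓ δ`, whose slopes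
`(1 ∓ δ)⁻¹ - 1` have absolute value at least `δ / 2`. Since `log (1 + x) ≤ x - x ^ 2 / 4` for
`-1 < x ≤ 1`, both tangent lines start below `-1 - δ ^ 2 / 4`. So the integrand is dominated by
`exp (-ρ * (1 + δ ^ 2 / 4))` times exponentials decaying at rate `ρ * δ / 2` away from the interval,
and their integrals are `O((ρ * δ)⁻¹)`, which is `O((ρ * δ ^ 2)⁻¹)`.
-/

open Real MeasureTheory Set

section SetIntegral

variable {α : Type*} [MeasurableSpace α] {μ : Measure α} {f g : α → ℝ} {s t : Set α}

theorem setIntegral_union_le_of_nonneg (hs : MeasurableSet s) (ht : MeasurableSet t)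
    (hst : Disjoint s t) (hf : ∀ x ∈ s ∪ t, 0 ≤ f x) :
    ∫ x in s ∪ t, f x ∂μ ≤ ∫ x in s, f x ∂μ + ∫ x in t, f x ∂μ := by
  by_cases hint : IntegrableOn f (s ∪ t) μ
  · exact (setIntegral_union hst ht (hint.mono_set subset_union_left)
      (hint.mono_set subset_union_right)).le
  · rw [integral_undef hint]
    exact add_nonneg (setIntegral_nonneg hs fun x hx => hf x (Or.inl hx))
      (setIntegral_nonneg ht fun x hx => hf x (Or.inr hx))

theorem setIntegral_le_setIntegral_of_le_of_subset (hs : MeasurableSet s) (ht : MeasurableSet t)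
    (hst : s ⊆ t) (hg : IntegrableOn g t μ) (hf : ∀ x ∈ s, 0 ≤ f x)
    (hfg : ∀ x ∈ s, f x ≤ g x) (hg0 : ∀ x ∈ t, 0 ≤ g x) :
    ∫ x in s, f x ∂μ ≤ ∫ x in t, g x ∂μ :=
  (integral_mono_of_nonneg (ae_restrict_of_forall_mem hs hf) (hg.mono_set hst)
    (ae_restrict_of_forall_mem hs hfg)).trans
    (setIntegral_mono_set hg (ae_restrict_of_forall_mem ht hg0) hst.eventuallyLE)

end SetIntegral

theorem integrableOn_exp_mul_sub_Iic {c : ℝ} (hc : 0 < c) (a : ℝ) :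
    IntegrableOn (fun t => exp (c * (t - a))) (Iic a) := by
  simp_rw [mul_sub, exp_sub]
  exact (integrableOn_exp_mul_Iic hc a).div_const _

theorem integral_exp_mul_sub_Iic {c : ℝ} (hc : 0 < c) (a : ℝ) :
    ∫ t in Iic a, exp (c * (t - a)) = c⁻¹ := by
  simp_rw [mul_sub, exp_sub]
  rw [integral_div, integral_exp_mul_Iic hc]
  field_simp

theorem integrableOn_exp_neg_mul_sub_Ioi {c : ℝ} (hc : 0 < c) (b : ℝ) :
    IntegrableOn (fun t => exp (-c * (t - b))) (Ioi b) := by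
  simp_rw [mul_sub, exp_sub]
  exact (integrableOn_exp_mul_Ioi (neg_lt_zero.2 hc) b).div_const _

theorem integral_exp_neg_mul_sub_Ioi {c : ℝ} (hc : 0 < c) (b : ℝ) :
    ∫ t in Ioi b, exp (-c * (t - b)) = c⁻¹ := by
  simp_rw [mul_sub, exp_sub]
  rw [integral_div, integral_exp_mul_Ioi (neg_lt_zero.2 hc)]
  field_simp

theorem Real.log_le_log_add_sub_div {t a : ℝ} (ht : 0 < t) (ha : 0 < a) :
    log t ≤ log a + (t - a) / a := by
  have h := log_le_sub_one_of_pos (div_pos ht ha)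
  rw [log_div ht.ne' ha.ne'] at h
  rw [sub_div, div_self ha.ne']
  linarith

theorem Real.log_one_add_le_sub_sq_div_four {x : ℝ} (hx₀ : -1 < x) (hx₁ : x ≤ 1) :
    log (1 + x) ≤ x - x ^ 2 / 4 := by
  rcases le_or_gt x 0 with hx | hx
  · have h₁ := log_le_log_add_sub_div (show 0 < 1 + x by linarith) (show 0 < 1 + x / 2 by linarith)
    have h₂ := log_le_sub_one_of_pos (show 0 < 1 + x / 2 by linarith)
    have h₃ : (1 + x - (1 + x / 2)) / (1 + x / 2) ≤ x / 2 - x ^ 2 / 4 := by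
      rw [div_le_iff₀ (by linarith)]
      nlinarith [pow_two_nonneg x]
    linarith
  · have h : 1 + x ≤ exp (x - x ^ 2 / 4) := by
      have := quadratic_le_exp_of_nonneg (show 0 ≤ x - x ^ 2 / 4 by nlinarith)
      nlinarith [mul_nonneg (mul_nonneg hx.le hx.le) (sub_nonneg.2 hx₁)]
    calc log (1 + x) ≤ log (exp (x - x ^ 2 / 4)) := log_le_log (by linarith) h
      _ = x - x ^ 2 / 4 := log_exp _

theorem rpow_mul_exp_neg_mul_le_tangent {ρ t a : ℝ} (hρ : 0 < ρ) (ht : 0 ≤ t) (ha : 0 < a) :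
    t ^ ρ * exp (-ρ * t) ≤ a ^ ρ * exp (-ρ * a) * exp (ρ * (a⁻¹ - 1) * (t - a)) := by
  rcases ht.eq_or_lt with rfl | ht
  · rw [zero_rpow hρ.ne', zero_mul]
    positivity
  rw [rpow_def_of_pos ht, rpow_def_of_pos ha, ← exp_add, ← exp_add, ← exp_add, exp_le_exp]
  have h := mul_le_mul_of_nonneg_left (log_le_log_add_sub_div ht ha) hρ.le
  rw [div_eq_inv_mul] at h
  linear_combination h

theorem one_add_rpow_mul_exp_neg_mul_le {ρ x : ℝ} (hρ : 0 ≤ ρ) (hx₀ : -1 < x) (hx₁ : x ≤ 1) :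
    (1 + x) ^ ρ * exp (-ρ * (1 + x)) ≤ exp (-ρ * (1 + x ^ 2 / 4)) := by
  rw [rpow_def_of_pos (by linarith), ← exp_add, exp_le_exp]
  linear_combination mul_le_mul_of_nonneg_left (log_one_add_le_sub_sq_div_four hx₀ hx₁) hρ

theorem rpow_mul_exp_neg_mul_le_of_le_one_sub {ρ δ t : ℝ} (hρ : 0 < ρ) (hδ₀ : 0 < δ)
    (hδ₁ : δ < 1) (ht₀ : 0 ≤ t) (ht : t ≤ 1 - δ) :
    t ^ ρ * exp (-ρ * t) ≤ exp (-ρ * (1 + δ ^ 2 / 4)) * exp (ρ * δ * (t - (1 - δ))) := by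
  have hslope : δ ≤ (1 - δ)⁻¹ - 1 := by
    rw [le_sub_iff_add_le, ← one_div, le_div_iff₀ (by linarith)]
    nlinarith
  calc t ^ ρ * exp (-ρ * t)
      ≤ (1 - δ) ^ ρ * exp (-ρ * (1 - δ)) * exp (ρ * ((1 - δ)⁻¹ - 1) * (t - (1 - δ))) :=
        rpow_mul_exp_neg_mul_le_tangent hρ ht₀ (by linarith)
    _ ≤ exp (-ρ * (1 + δ ^ 2 / 4)) * exp (ρ * δ * (t - (1 - δ))) := by
        gcongr ?_ * exp ?_
        · simpa [sub_eq_add_neg] using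
            one_add_rpow_mul_exp_neg_mul_le hρ.le (x := -δ) (by linarith) (by linarith)
        · linear_combination mul_le_mul_of_nonpos_right hslope
            (mul_nonpos_of_nonneg_of_nonpos hρ.le (sub_nonpos.2 ht))

theorem rpow_mul_exp_neg_mul_le_of_one_add_le {ρ δ t : ℝ} (hρ : 0 < ρ) (hδ₀ : 0 < δ)
    (hδ₁ : δ ≤ 1) (ht : 1 + δ ≤ t) :
    t ^ ρ * exp (-ρ * t) ≤ exp (-ρ * (1 + δ ^ 2 / 4)) * exp (-(ρ * δ / 2) * (t - (1 + δ))) := by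
  have hslope : (1 + δ)⁻¹ - 1 ≤ -(δ / 2) := by
    rw [sub_le_iff_le_add, ← one_div, div_le_iff₀ (by linarith)]
    nlinarith
  calc t ^ ρ * exp (-ρ * t)
      ≤ (1 + δ) ^ ρ * exp (-ρ * (1 + δ)) * exp (ρ * ((1 + δ)⁻¹ - 1) * (t - (1 + δ))) :=
        rpow_mul_exp_neg_mul_le_tangent hρ (by linarith) (by linarith)
    _ ≤ exp (-ρ * (1 + δ ^ 2 / 4)) * exp (-(ρ * δ / 2) * (t - (1 + δ))) := by
        gcongr ?_ * exp ?_
        · exact one_add_rpow_mul_exp_neg_mul_le hρ.le (by linarith) hδ₁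
        · linear_combination mul_le_mul_of_nonneg_right hslope
            (mul_nonneg hρ.le (sub_nonneg.2 ht))

theorem setOf_nonneg_and_notMem_Icc {a b : ℝ} (hb : 0 ≤ b) :
    {t : ℝ | 0 ≤ t ∧ t ∉ Icc a b} = Ico 0 a ∪ Ioi b := by
  ext t
  simp only [mem_ofPred_eq, mem_Icc, mem_union, mem_Ico, mem_Ioi, not_and_or, not_le]
  constructor
  · rintro ⟨ht, h | h⟩
    exacts [Or.inl ⟨ht, h⟩, Or.inr h]
  · rintro (⟨ht, h⟩ | h)
    exacts [⟨ht, Or.inl h⟩, ⟨hb.trans h.le, Or.inr h⟩]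

theorem setIntegral_Ico_rpow_mul_exp_neg_mul_le {ρ δ : ℝ} (hρ : 0 < ρ) (hδ₀ : 0 < δ)
    (hδ₁ : δ < 1) :
    ∫ t in Ico 0 (1 - δ), t ^ ρ * exp (-ρ * t) ≤ exp (-ρ * (1 + δ ^ 2 / 4)) * (ρ * δ)⁻¹ := by
  rw [← integral_exp_mul_sub_Iic (by positivity) (1 - δ), ← integral_const_mul]
  refine setIntegral_le_setIntegral_of_le_of_subset measurableSet_Ico measurableSet_Iic
    (Ico_subset_Iio_self.trans Iio_subset_Iic_self)
    ((integrableOn_exp_mul_sub_Iic (by positivity) _).const_mul _)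
    (fun t ht => by have := ht.1; positivity) (fun t ht => ?_) (fun t _ => by positivity)
  exact rpow_mul_exp_neg_mul_le_of_le_one_sub hρ hδ₀ hδ₁ ht.1 ht.2.le

theorem setIntegral_Ioi_rpow_mul_exp_neg_mul_le {ρ δ : ℝ} (hρ : 0 < ρ) (hδ₀ : 0 < δ)
    (hδ₁ : δ ≤ 1) :
    ∫ t in Ioi (1 + δ), t ^ ρ * exp (-ρ * t) ≤ exp (-ρ * (1 + δ ^ 2 / 4)) * (ρ * δ / 2)⁻¹ := by
  rw [← integral_exp_neg_mul_sub_Ioi (by positivity) (1 + δ), ← integral_const_mul]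
  refine setIntegral_le_setIntegral_of_le_of_subset measurableSet_Ioi measurableSet_Ioi
    subset_rfl ((integrableOn_exp_neg_mul_sub_Ioi (by positivity) _).const_mul _)
    (fun t ht => ?_) (fun t ht => ?_) (fun t _ => by positivity)
  · have : 0 ≤ t := by linarith [mem_Ioi.1 ht]
    positivity
  · exact rpow_mul_exp_neg_mul_le_of_one_add_le hρ hδ₀ hδ₁ (mem_Ioi.1 ht).le

theorem tail_integral_estimate : ∃ C : ℝ, 0 < C ∧ ∀ ρ δ : ℝ, 0 < ρ → 0 < δ → δ < 1 →
    (∫ t in {t : ℝ | 0 ≤ t ∧ t ∉ Set.Icc (1 - δ) (1 + δ)}, t ^ ρ * Real.exp (-ρ * t))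
      ≤ C * (ρ * δ ^ 2)⁻¹ * Real.exp (-ρ * (1 + δ ^ 2 / 4)) := by
  refine ⟨3, by norm_num, fun ρ δ hρ hδ₀ hδ₁ => ?_⟩
  set E := exp (-ρ * (1 + δ ^ 2 / 4))
  have hS := setOf_nonneg_and_notMem_Icc (a := 1 - δ) (b := 1 + δ) (by linarith)
  have hnonneg : ∀ t ∈ Ico 0 (1 - δ) ∪ Ioi (1 + δ), 0 ≤ t ^ ρ * exp (-ρ * t) := by
    rw [← hS]
    exact fun t ht => by have := ht.1; positivity
  rw [hS]
  calc _ ≤ _ + _ := setIntegral_union_le_of_nonneg measurableSet_Ico measurableSet_Ioi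
          ((Iic_disjoint_Ioi (by linarith)).mono_left
            (Ico_subset_Iio_self.trans Iio_subset_Iic_self)) hnonneg
    _ ≤ E * (ρ * δ)⁻¹ + E * (ρ * δ / 2)⁻¹ :=
        add_le_add (setIntegral_Ico_rpow_mul_exp_neg_mul_le hρ hδ₀ hδ₁)
          (setIntegral_Ioi_rpow_mul_exp_neg_mul_le hρ hδ₀ hδ₁.le)
    _ = 3 * (ρ * δ)⁻¹ * E := by field_simp; ring
    _ ≤ 3 * (ρ * δ ^ 2)⁻¹ * E := by gcongr; nlinarith
end

section
/- For all ρ > 0 and 0 < δ < 1, ∫_0^{1-δ} t^ρ e^{-ρ t} dt ≤ (ρ δ)^{-1} · ((1-δ) e^{-1+δ})^ρ. -/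
/-!
With `f t = t ^ ρ * exp (-ρ t) = (t e⁻ᵗ) ^ ρ` one has `f' t = ρ t ^ (ρ - 1) (1 - t) e^{-ρ t}`, and on
`[0, 1 - δ]` the bound `δ t ≤ δ ≤ 1 - t` gives `ρ δ f ≤ f'`. Hence `ρ δ ∫₀^{1-δ} f ≤ f (1 - δ) - f 0`,
which is the claim since `f 0 = 0`.
-/

open Real Set

lemma continuous_rpow_mul_exp_neg_mul {ρ : ℝ} (hρ : 0 ≤ ρ) :
    Continuous fun t : ℝ => t ^ ρ * exp (-ρ * t) := by
  have := Real.continuous_rpow_const hρ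
  fun_prop

lemma hasDerivAt_rpow_mul_exp_neg_mul (ρ : ℝ) {t : ℝ} (ht : 0 < t) :
    HasDerivAt (fun t : ℝ => t ^ ρ * exp (-ρ * t))
      (ρ * t ^ (ρ - 1) * (1 - t) * exp (-ρ * t)) t := by
  have hpow := Real.hasDerivAt_rpow_const (p := ρ) (Or.inl ht.ne')
  have hexp : HasDerivAt (fun t : ℝ => exp (-ρ * t)) (exp (-ρ * t) * -ρ) t := by
    simpa using ((hasDerivAt_id t).const_mul (-ρ)).exp
  refine (hpow.mul hexp).congr_deriv ?_
  rw [rpow_sub_one ht.ne']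
  field_simp
  ring

lemma mul_rpow_mul_exp_neg_mul_le {ρ δ t : ℝ} (hρ : 0 ≤ ρ) (ht : 0 < t) (hδt : δ * t ≤ 1 - t) :
    ρ * δ * (t ^ ρ * exp (-ρ * t)) ≤ ρ * t ^ (ρ - 1) * (1 - t) * exp (-ρ * t) := by
  have hpow : t ^ ρ = t ^ (ρ - 1) * t := by rw [← rpow_add_one ht.ne']; ring_nf
  have : 0 ≤ ρ * t ^ (ρ - 1) * exp (-ρ * t) := by positivity
  rw [hpow]
  nlinarith

lemma rpow_mul_exp_neg_mul_eq {t : ℝ} (ht : 0 ≤ t) (ρ : ℝ) :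
    t ^ ρ * exp (-ρ * t) = (t * exp (-t)) ^ ρ := by
  rw [Real.mul_rpow ht (exp_pos _).le, ← Real.exp_mul]
  ring_nf

theorem lower_tail_estimate (ρ δ : ℝ) (hρ : 0 < ρ) (hδ0 : 0 < δ) (hδ1 : δ < 1) :
    ∫ t in (0:ℝ)..(1 - δ), t ^ ρ * Real.exp (-ρ * t)
      ≤ (ρ * δ)⁻¹ * ((1 - δ) * Real.exp (-1 + δ)) ^ ρ := by
  have hρδ : 0 < ρ * δ := mul_pos hρ hδ0
  have hcont := continuous_rpow_mul_exp_neg_mul hρ.le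
  have hint := intervalIntegral.integral_le_sub_of_hasDeriv_right_of_le (b := 1 - δ) (by linarith)
    (hcont.const_smul (ρ * δ)⁻¹).continuousOn
    (fun t ht => ((hasDerivAt_rpow_mul_exp_neg_mul ρ ht.1).const_mul (ρ * δ)⁻¹).hasDerivWithinAt)
    hcont.integrableOn_Icc
    (fun t ht => by
      rw [le_inv_mul_iff₀ hρδ]
      exact mul_rpow_mul_exp_neg_mul_le hρ.le ht.1 (by nlinarith [ht.2]))
  have hend : (1 - δ) ^ ρ * exp (-ρ * (1 - δ)) = ((1 - δ) * exp (-1 + δ)) ^ ρ := by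
    rw [rpow_mul_exp_neg_mul_eq (by linarith)]
    ring_nf
  rw [← hend]
  simpa [zero_rpow hρ.ne'] using hint
end

section
/- Let f be a bi-homogeneous form of degree m on ℂⁿ with coefficient matrix (c_{αβ}) and define Λ(f) := (Σ_{|α|=|β|=m} (α!β!/(m!)²)|c_{αβ}|²)^{1/2}. Then Λ((1/4)Δ f) ≤ n m² Λ(f). -/
private lemma aux_prod_fact {n : ℕ} (γ : Fin n → ℕ) (i : Fin n) :
    (∏ j, (Nat.factorial (γ j + if j = i then 1 else 0) : ℝ))
      = ((γ i : ℝ) + 1) * ∏ j, (Nat.factorial (γ j) : ℝ) := by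
  rw [← Finset.mul_prod_erase Finset.univ _ (Finset.mem_univ i),
      ← Finset.mul_prod_erase Finset.univ (fun j => (Nat.factorial (γ j) : ℝ))
        (Finset.mem_univ i),
      Finset.prod_congr rfl (fun j hj => by
        rw [if_neg (Finset.mem_erase.mp hj).1, add_zero])]
  rw [if_pos rfl, Nat.factorial_succ]
  push_cast
  ring

private lemma aux_mem {n m : ℕ} (hm : 1 ≤ m) {γ : Fin n → ℕ} (i : Fin n)
    (h : γ ∈ Finset.Nat.antidiagonalTuple n (m - 1)) :
    (fun j => γ j + if j = i then 1 else 0) ∈ Finset.Nat.antidiagonalTuple n m := by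
  rw [Finset.Nat.mem_antidiagonalTuple] at h ⊢
  rw [Finset.sum_add_distrib, h]
  simp
  omega

private lemma aux_sum_le {n m : ℕ} (hm : 1 ≤ m) (i : Fin n) (g : (Fin n → ℕ) → ℝ)
    (hg : ∀ α, 0 ≤ g α) :
    ∑ γ ∈ Finset.Nat.antidiagonalTuple n (m - 1), g (fun j => γ j + if j = i then 1 else 0)
      ≤ ∑ α ∈ Finset.Nat.antidiagonalTuple n m, g α := by
  have hinj : Set.InjOn (fun (γ : Fin n → ℕ) => (fun j => γ j + if j = i then 1 else 0))
      (Finset.Nat.antidiagonalTuple n (m - 1)) := by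
    intro a _ b _ hab
    funext j
    have := congrFun hab j
    simpa using this
  rw [← Finset.sum_image (fun a ha b hb h => hinj ha hb h)]
  apply Finset.sum_le_sum_of_subset_of_nonneg
  · intro α hα
    obtain ⟨γ, hγ, rfl⟩ := Finset.mem_image.mp hα
    exact aux_mem hm i hγ
  · intro _ _ _
    exact hg _

theorem laplacian_hilbert_schmidt_bound (n m : ℕ) (hm : 1 ≤ m)
    (c : (Fin n → ℕ) → (Fin n → ℕ) → ℂ)
    (d : (Fin n → ℕ) → (Fin n → ℕ) → ℂ)
    (hd : ∀ γ ρ : Fin n → ℕ, d γ ρ = ∑ i, (((γ i + 1) * (ρ i + 1) : ℕ) : ℂ)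
        * c (fun j => γ j + if j = i then 1 else 0) (fun j => ρ j + if j = i then 1 else 0)) :
    Real.sqrt (∑ γ ∈ Finset.Nat.antidiagonalTuple n (m - 1),
        ∑ ρ ∈ Finset.Nat.antidiagonalTuple n (m - 1),
          ((∏ i, (Nat.factorial (γ i) : ℝ)) * (∏ i, (Nat.factorial (ρ i) : ℝ))
              / (Nat.factorial (m - 1) : ℝ) ^ 2) * ‖d γ ρ‖ ^ 2)
      ≤ (n : ℝ) * (m : ℝ) ^ 2 *
        Real.sqrt (∑ α ∈ Finset.Nat.antidiagonalTuple n m,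
          ∑ β ∈ Finset.Nat.antidiagonalTuple n m,
            ((∏ i, (Nat.factorial (α i) : ℝ)) * (∏ i, (Nat.factorial (β i) : ℝ))
                / (Nat.factorial m : ℝ) ^ 2) * ‖c α β‖ ^ 2) := by
  set A1 := Finset.Nat.antidiagonalTuple n (m - 1) with hA1
  set Am := Finset.Nat.antidiagonalTuple n m with hAm
  set W : (Fin n → ℕ) → (Fin n → ℕ) → ℝ := fun α β =>
    (∏ i, (Nat.factorial (α i) : ℝ)) * (∏ i, (Nat.factorial (β i) : ℝ))
      / (Nat.factorial m : ℝ) ^ 2 with hW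
  set w : (Fin n → ℕ) → (Fin n → ℕ) → ℝ := fun γ ρ =>
    (∏ i, (Nat.factorial (γ i) : ℝ)) * (∏ i, (Nat.factorial (ρ i) : ℝ))
      / (Nat.factorial (m - 1) : ℝ) ^ 2 with hw
  set R : ℝ := ∑ α ∈ Am, ∑ β ∈ Am, W α β * ‖c α β‖ ^ 2 with hR
  set t : Fin n → (Fin n → ℕ) → (Fin n → ℕ) → ℝ := fun i γ ρ =>
    (((γ i + 1) * (ρ i + 1) : ℕ) : ℝ) ^ 2 *
      ‖c (fun j => γ j + if j = i then 1 else 0) (fun j => ρ j + if j = i then 1 else 0)‖ ^ 2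
    with ht
  have hRnonneg : 0 ≤ R := by
    apply Finset.sum_nonneg; intro α _; apply Finset.sum_nonneg; intro β _
    positivity
  have hwnn : ∀ γ ρ, 0 ≤ w γ ρ := by intro γ ρ; positivity
  -- Step 1: Cauchy–Schwarz on the sum defining d
  have hkey : ∀ γ ρ, ‖d γ ρ‖ ^ 2 ≤ (n : ℝ) * ∑ i, t i γ ρ := by
    intro γ ρ
    rw [hd]
    calc ‖∑ i, (((γ i + 1) * (ρ i + 1) : ℕ) : ℂ)
            * c (fun j => γ j + if j = i then 1 else 0)
                (fun j => ρ j + if j = i then 1 else 0)‖ ^ 2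
        ≤ (∑ i, ‖(((γ i + 1) * (ρ i + 1) : ℕ) : ℂ)
            * c (fun j => γ j + if j = i then 1 else 0)
                (fun j => ρ j + if j = i then 1 else 0)‖) ^ 2 := by
          exact pow_le_pow_left₀ (norm_nonneg _) (norm_sum_le _ _) 2
      _ ≤ (Finset.univ.card : ℝ) * ∑ i, ‖(((γ i + 1) * (ρ i + 1) : ℕ) : ℂ)
            * c (fun j => γ j + if j = i then 1 else 0)
                (fun j => ρ j + if j = i then 1 else 0)‖ ^ 2 := by
          have h := sq_sum_le_card_mul_sum_sq (α := ℝ) (s := (Finset.univ : Finset (Fin n)))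
            (f := fun i => ‖(((γ i + 1) * (ρ i + 1) : ℕ) : ℂ)
              * c (fun j => γ j + if j = i then 1 else 0)
                  (fun j => ρ j + if j = i then 1 else 0)‖)
          exact_mod_cast h
      _ = (n : ℝ) * ∑ i, t i γ ρ := by
          rw [Finset.card_univ, Fintype.card_fin]
          congr 1
          apply Finset.sum_congr rfl
          intro i _
          rw [ht, norm_mul, mul_pow, Complex.norm_natCast]
  -- Step 2: per-coordinate bound after reindexing
  have hstep : ∀ i : Fin n, ∑ γ ∈ A1, ∑ ρ ∈ A1, w γ ρ * t i γ ρ ≤ (m : ℝ) ^ 4 * R := by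
    intro i
    have hterm : ∀ γ ∈ A1, ∀ ρ ∈ A1, w γ ρ * t i γ ρ ≤ (m : ℝ) ^ 4 *
        (W (fun j => γ j + if j = i then 1 else 0) (fun j => ρ j + if j = i then 1 else 0) *
          ‖c (fun j => γ j + if j = i then 1 else 0)
             (fun j => ρ j + if j = i then 1 else 0)‖ ^ 2) := by
      intro γ hγ ρ hρ
      have hγi : (γ i : ℝ) + 1 ≤ m := by
        rw [Finset.Nat.mem_antidiagonalTuple] at hγ
        have : γ i ≤ m - 1 := hγ ▸ Finset.single_le_sum (fun j _ => Nat.zero_le _)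
          (Finset.mem_univ i)
        have : γ i + 1 ≤ m := by omega
        exact_mod_cast this
      have hρi : (ρ i : ℝ) + 1 ≤ m := by
        rw [Finset.Nat.mem_antidiagonalTuple] at hρ
        have : ρ i ≤ m - 1 := hρ ▸ Finset.single_le_sum (fun j _ => Nat.zero_le _)
          (Finset.mem_univ i)
        have : ρ i + 1 ≤ m := by omega
        exact_mod_cast this
      have hmf : (Nat.factorial m : ℝ) = (m : ℝ) * (Nat.factorial (m - 1) : ℝ) := by
        rw [← Nat.cast_mul, Nat.mul_factorial_pred (by omega)]
      have hF : (0 : ℝ) < (Nat.factorial (m - 1) : ℝ) := by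
        exact_mod_cast Nat.factorial_pos _
      have hm0 : (0 : ℝ) < m := by exact_mod_cast hm
      simp only [hw, ht, hW]
      rw [aux_prod_fact γ i, aux_prod_fact ρ i, hmf]
      have hP1 : (0:ℝ) ≤ ∏ j, (Nat.factorial (γ j) : ℝ) :=
        Finset.prod_nonneg fun j _ => by positivity
      have hP2 : (0:ℝ) ≤ ∏ j, (Nat.factorial (ρ j) : ℝ) :=
        Finset.prod_nonneg fun j _ => by positivity
      have hC : (0:ℝ) ≤ ‖c (fun j => γ j + if j = i then 1 else 0)
          (fun j => ρ j + if j = i then 1 else 0)‖ ^ 2 := by positivity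
      set P1 := ∏ j, (Nat.factorial (γ j) : ℝ)
      set P2 := ∏ j, (Nat.factorial (ρ j) : ℝ)
      set C := ‖c (fun j => γ j + if j = i then 1 else 0)
          (fun j => ρ j + if j = i then 1 else 0)‖ ^ 2
      push_cast
      have hg0 : (0:ℝ) ≤ (γ i : ℝ) := Nat.cast_nonneg _
      have hr0 : (0:ℝ) ≤ (ρ i : ℝ) := Nat.cast_nonneg _
      have hab : ((γ i : ℝ) + 1) * ((ρ i : ℝ) + 1) ≤ (m : ℝ) ^ 2 := by nlinarith
      have hFne : ((m - 1).factorial : ℝ) ≠ 0 := ne_of_gt hF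
      have hmne : (m : ℝ) ≠ 0 := ne_of_gt hm0
      have key : (((γ i : ℝ) + 1) * ((ρ i : ℝ) + 1)) * ((((γ i : ℝ) + 1) * ((ρ i : ℝ) + 1)) *
            (P1 * P2 * C / ((m - 1).factorial : ℝ) ^ 2))
          ≤ (((γ i : ℝ) + 1) * ((ρ i : ℝ) + 1)) * ((m : ℝ) ^ 2 *
            (P1 * P2 * C / ((m - 1).factorial : ℝ) ^ 2)) := by
        apply mul_le_mul_of_nonneg_left _ (by positivity)
        exact mul_le_mul_of_nonneg_right hab (by positivity)
      refine le_trans (le_of_eq ?_) (le_trans key (le_of_eq ?_))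
      · ring
      · field_simp
    calc ∑ γ ∈ A1, ∑ ρ ∈ A1, w γ ρ * t i γ ρ
        ≤ ∑ γ ∈ A1, ∑ ρ ∈ A1, (m : ℝ) ^ 4 *
            (W (fun j => γ j + if j = i then 1 else 0)
               (fun j => ρ j + if j = i then 1 else 0) *
              ‖c (fun j => γ j + if j = i then 1 else 0)
                 (fun j => ρ j + if j = i then 1 else 0)‖ ^ 2) :=
          Finset.sum_le_sum fun γ hγ => Finset.sum_le_sum fun ρ hρ => hterm γ hγ ρ hρ
      _ = (m : ℝ) ^ 4 * ∑ γ ∈ A1, ∑ ρ ∈ A1,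
            (W (fun j => γ j + if j = i then 1 else 0)
               (fun j => ρ j + if j = i then 1 else 0) *
              ‖c (fun j => γ j + if j = i then 1 else 0)
                 (fun j => ρ j + if j = i then 1 else 0)‖ ^ 2) := by
          rw [Finset.mul_sum]
          exact Finset.sum_congr rfl fun γ _ => by rw [Finset.mul_sum]
      _ ≤ (m : ℝ) ^ 4 * R := by
          apply mul_le_mul_of_nonneg_left _ (by positivity)
          rw [hR]
          calc ∑ γ ∈ A1, ∑ ρ ∈ A1,
                (W (fun j => γ j + if j = i then 1 else 0)
                   (fun j => ρ j + if j = i then 1 else 0) *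
                  ‖c (fun j => γ j + if j = i then 1 else 0)
                     (fun j => ρ j + if j = i then 1 else 0)‖ ^ 2)
              ≤ ∑ α ∈ Am, ∑ ρ ∈ A1,
                (W α (fun j => ρ j + if j = i then 1 else 0) *
                  ‖c α (fun j => ρ j + if j = i then 1 else 0)‖ ^ 2) := by
                exact aux_sum_le hm i
                  (fun α => ∑ ρ ∈ A1, W α (fun j => ρ j + if j = i then 1 else 0) *
                    ‖c α (fun j => ρ j + if j = i then 1 else 0)‖ ^ 2)
                  (fun α => Finset.sum_nonneg fun ρ _ => by positivity)
            _ ≤ ∑ α ∈ Am, ∑ β ∈ Am, W α β * ‖c α β‖ ^ 2 := by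
                refine Finset.sum_le_sum fun α _ => ?_
                exact aux_sum_le hm i (fun β => W α β * ‖c α β‖ ^ 2)
                  (fun β => by positivity)
  -- Assemble
  have hmain : ∑ γ ∈ A1, ∑ ρ ∈ A1, w γ ρ * ‖d γ ρ‖ ^ 2
      ≤ ((n : ℝ) * (m : ℝ) ^ 2) ^ 2 * R := by
    calc ∑ γ ∈ A1, ∑ ρ ∈ A1, w γ ρ * ‖d γ ρ‖ ^ 2
        ≤ ∑ γ ∈ A1, ∑ ρ ∈ A1, w γ ρ * ((n : ℝ) * ∑ i, t i γ ρ) :=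
          Finset.sum_le_sum fun γ _ => Finset.sum_le_sum fun ρ _ =>
            mul_le_mul_of_nonneg_left (hkey γ ρ) (hwnn γ ρ)
      _ = ∑ γ ∈ A1, ∑ ρ ∈ A1, ∑ i, (n : ℝ) * (w γ ρ * t i γ ρ) := by
          refine Finset.sum_congr rfl fun γ _ => Finset.sum_congr rfl fun ρ _ => ?_
          rw [Finset.mul_sum, Finset.mul_sum]
          refine Finset.sum_congr rfl fun i _ => ?_
          ring
      _ = ∑ i, ∑ γ ∈ A1, ∑ ρ ∈ A1, (n : ℝ) * (w γ ρ * t i γ ρ) := by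
          rw [show (∑ γ ∈ A1, ∑ ρ ∈ A1, ∑ i : Fin n, (n : ℝ) * (w γ ρ * t i γ ρ))
              = ∑ γ ∈ A1, ∑ i : Fin n, ∑ ρ ∈ A1, (n : ℝ) * (w γ ρ * t i γ ρ) from
            Finset.sum_congr rfl fun γ _ => Finset.sum_comm]
          exact Finset.sum_comm
      _ = (n : ℝ) * ∑ i, ∑ γ ∈ A1, ∑ ρ ∈ A1, w γ ρ * t i γ ρ := by
          rw [Finset.mul_sum]
          refine Finset.sum_congr rfl fun i _ => ?_
          rw [Finset.mul_sum]
          refine Finset.sum_congr rfl fun γ _ => ?_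
          rw [Finset.mul_sum]
      _ ≤ (n : ℝ) * ∑ i : Fin n, (m : ℝ) ^ 4 * R := by
          apply mul_le_mul_of_nonneg_left (Finset.sum_le_sum fun i _ => hstep i)
            (by positivity)
      _ = ((n : ℝ) * (m : ℝ) ^ 2) ^ 2 * R := by
          rw [Finset.sum_const, Finset.card_univ, Fintype.card_fin, nsmul_eq_mul]
          ring
  calc Real.sqrt (∑ γ ∈ A1, ∑ ρ ∈ A1, w γ ρ * ‖d γ ρ‖ ^ 2)
      ≤ Real.sqrt (((n : ℝ) * (m : ℝ) ^ 2) ^ 2 * R) := Real.sqrt_le_sqrt hmain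
    _ = (n : ℝ) * (m : ℝ) ^ 2 * Real.sqrt R := by
        rw [Real.sqrt_mul (sq_nonneg _), Real.sqrt_sq (by positivity)]
end

section
/- Let f be a bi-homogeneous form of degree m on ℂⁿ and j a natural number with j ≤ m. Then max_{‖z‖=1} |((1/4)Δ)^j f(z, z̄)| ≤ (n m²)^j Λ(f), where Λ(f) := (Σ_{|α|=|β|=m} (α!β!/(m!)²)|c_{αβ}|²)^{1/2}. -/
/-!
On the unit sphere a form `∑ a γ ρ z^γ z̄^ρ` of bidegree `(d, d)` is bounded by `Λ(a)`: by
Cauchy–Schwarz with weights `γ! ρ! / (d!)²` the other factor is `(∑_γ (d!/γ!) |z^γ|²)²`, which is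
`‖z‖^{4d} = 1` by the multinomial theorem. The operator `(1/4)Δ = ∑ᵢ ∂²/∂zᵢ∂z̄ᵢ` lowers the
bidegree by one, and Cauchy–Schwarz over `i` together with `(γᵢ+1)(ρᵢ+1) ≤ (d+1)²` shows that it
multiplies `Λ` by at most `n (d+1)² ≤ n m²`.
-/

open Finset ComplexConjugate
open scoped Nat

namespace Finset.Nat

theorem le_of_mem_antidiagonalTuple {k d : ℕ} {γ : Fin k → ℕ} (hγ : γ ∈ antidiagonalTuple k d)
    (i : Fin k) : γ i ≤ d :=
  mem_antidiagonalTuple.1 hγ ▸ single_le_sum (fun _ _ => Nat.zero_le _) (mem_univ i)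

theorem add_single_mem_antidiagonalTuple {k d : ℕ} {γ : Fin k → ℕ}
    (hγ : γ ∈ antidiagonalTuple k d) (i : Fin k) :
    γ + Pi.single i 1 ∈ antidiagonalTuple k (d + 1) := by
  rw [mem_antidiagonalTuple] at hγ ⊢
  simp [sum_add_distrib, hγ]

theorem sum_antidiagonalTuple_add_single_le {M : Type*} [AddCommMonoid M] [PartialOrder M]
    [IsOrderedAddMonoid M] {k : ℕ} (d : ℕ) (i : Fin k) {g : (Fin k → ℕ) → M}
    (hg : ∀ α, 0 ≤ g α) :
    ∑ γ ∈ antidiagonalTuple k d, g (γ + Pi.single i 1)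
      ≤ ∑ α ∈ antidiagonalTuple k (d + 1), g α := by
  refine (sum_map _ (addRightEmbedding (Pi.single i 1)) g).symm.trans_le <|
    sum_le_sum_of_subset_of_nonneg (fun α hα => ?_) fun α _ _ => hg α
  obtain ⟨γ, hγ, rfl⟩ := mem_map.1 hα
  exact add_single_mem_antidiagonalTuple hγ i

theorem sum_pow_eq_sum_antidiagonalTuple {K : Type*} [Field K] [CharZero K] (k d : ℕ)
    (x : Fin k → K) :
    (∑ i, x i) ^ d
      = ∑ γ ∈ antidiagonalTuple k d, ((d ! : K) / ∏ i, ((γ i)! : K)) * ∏ i, x i ^ γ i := by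
  rw [sum_pow_eq_sum_piAntidiag, piAntidiag_univ_fin_eq_antidiagonalTuple]
  refine sum_congr rfl fun γ hγ => ?_
  have hspec := Nat.multinomial_spec univ γ
  rw [mem_antidiagonalTuple.1 hγ] at hspec
  have hne : (∏ i, ((γ i)! : K)) ≠ 0 :=
    prod_ne_zero_iff.2 fun i _ => Nat.cast_ne_zero.2 (γ i).factorial_ne_zero
  rw [← hspec]
  push_cast
  rw [mul_div_cancel_left₀ _ hne]

end Finset.Nat

theorem Nat.prod_factorial_add_single {ι : Type*} [Fintype ι] [DecidableEq ι] (γ : ι → ℕ)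
    (i : ι) : ∏ l, ((γ + Pi.single i 1 : ι → ℕ) l)! = (γ i + 1) * ∏ l, (γ l)! := by
  have hcompl : ∀ l ∈ ({i}ᶜ : Finset ι), ((γ + Pi.single i 1 : ι → ℕ) l)! = (γ l)! :=
    fun l hl => by simp [Pi.single_eq_of_ne (by simpa using hl : l ≠ i)]
  rw [Fintype.prod_eq_mul_prod_compl i, prod_congr rfl hcompl,
    Fintype.prod_eq_mul_prod_compl i (fun l => (γ l)!)]
  simp [Nat.factorial_succ, mul_assoc]

namespace BihomogeneousForm

variable {n : ℕ}

/-- The coefficients of `(1/4)Δ f = ∑ᵢ ∂²f/∂zᵢ∂z̄ᵢ`, where `f = ∑ a α β z^α z̄^β`. -/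
def laplaceCoeff (a : (Fin n → ℕ) → (Fin n → ℕ) → ℂ) (γ ρ : Fin n → ℕ) : ℂ :=
  ∑ i, (((γ i + 1) * (ρ i + 1) : ℕ) : ℂ) * a (γ + Pi.single i 1) (ρ + Pi.single i 1)

noncomputable def lambdaWeight (d : ℕ) (α β : Fin n → ℕ) : ℝ :=
  (∏ i, ((α i)! : ℝ)) * (∏ i, ((β i)! : ℝ)) / (d ! : ℝ) ^ 2

/-- `Λ(f)²` for `f = ∑ a α β z^α z̄^β` of bidegree `(d, d)`. -/
noncomputable def lambdaSq (d : ℕ) (a : (Fin n → ℕ) → (Fin n → ℕ) → ℂ) : ℝ :=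
  ∑ α ∈ Nat.antidiagonalTuple n d, ∑ β ∈ Nat.antidiagonalTuple n d,
    lambdaWeight d α β * ‖a α β‖ ^ 2

theorem lambdaWeight_pos (d : ℕ) (α β : Fin n → ℕ) : 0 < lambdaWeight d α β := by
  unfold lambdaWeight; positivity

theorem lambdaSq_nonneg (d : ℕ) (a : (Fin n → ℕ) → (Fin n → ℕ) → ℂ) : 0 ≤ lambdaSq d a :=
  sum_nonneg fun α _ => sum_nonneg fun β _ => mul_nonneg (lambdaWeight_pos d α β).le (sq_nonneg _)

theorem lambdaWeight_mul_succ_mul_succ (d : ℕ) (γ ρ : Fin n → ℕ) (i : Fin n) :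
    lambdaWeight d γ ρ * (((γ i + 1) * (ρ i + 1) : ℕ) : ℝ)
      = ((d : ℝ) + 1) ^ 2 * lambdaWeight (d + 1) (γ + Pi.single i 1) (ρ + Pi.single i 1) := by
  have hγ := congrArg (Nat.cast : ℕ → ℝ) (Nat.prod_factorial_add_single γ i)
  have hρ := congrArg (Nat.cast : ℕ → ℝ) (Nat.prod_factorial_add_single ρ i)
  push_cast at hγ hρ
  simp only [lambdaWeight, hγ, hρ, Nat.factorial_succ]
  push_cast
  field_simp

theorem norm_laplaceCoeff_sq_le {d : ℕ} (a : (Fin n → ℕ) → (Fin n → ℕ) → ℂ) {γ ρ : Fin n → ℕ}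
    (hγ : γ ∈ Nat.antidiagonalTuple n d) (hρ : ρ ∈ Nat.antidiagonalTuple n d) :
    ‖laplaceCoeff a γ ρ‖ ^ 2 ≤ n * ((d : ℝ) + 1) ^ 2 *
      ∑ i, (((γ i + 1) * (ρ i + 1) : ℕ) : ℝ) *
        ‖a (γ + Pi.single i 1) (ρ + Pi.single i 1)‖ ^ 2 := by
  set c : Fin n → ℝ := fun i => (((γ i + 1) * (ρ i + 1) : ℕ) : ℝ)
  set N : Fin n → ℝ := fun i => ‖a (γ + Pi.single i 1) (ρ + Pi.single i 1)‖
  have hc : ∀ i, c i ≤ ((d : ℝ) + 1) ^ 2 := fun i => by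
    have := Nat.mul_le_mul (Nat.succ_le_succ (Nat.le_of_mem_antidiagonalTuple hγ i))
      (Nat.succ_le_succ (Nat.le_of_mem_antidiagonalTuple hρ i))
    simp only [c]
    rw [sq]
    exact_mod_cast this
  calc ‖laplaceCoeff a γ ρ‖ ^ 2 ≤ (∑ i, c i * N i) ^ 2 := by
        gcongr
        refine (norm_sum_le _ _).trans_eq (sum_congr rfl fun i _ => ?_)
        rw [norm_mul, Complex.norm_natCast]
    _ ≤ (∑ i, c i) * ∑ i, c i * N i ^ 2 :=
        sum_sq_le_sum_mul_sum_of_sq_le_mul _ (fun i _ => by positivity) (fun i _ => by positivity)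
          fun i _ => (by ring : _ = _).le
    _ ≤ n * ((d : ℝ) + 1) ^ 2 * ∑ i, c i * N i ^ 2 := by
        gcongr
        simpa using sum_le_card_nsmul univ c _ fun i _ => hc i

theorem lambdaWeight_mul_norm_laplaceCoeff_sq_le {d : ℕ} (a : (Fin n → ℕ) → (Fin n → ℕ) → ℂ)
    {γ ρ : Fin n → ℕ} (hγ : γ ∈ Nat.antidiagonalTuple n d) (hρ : ρ ∈ Nat.antidiagonalTuple n d) :
    lambdaWeight d γ ρ * ‖laplaceCoeff a γ ρ‖ ^ 2 ≤ n * ((d : ℝ) + 1) ^ 4 *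
      ∑ i, lambdaWeight (d + 1) (γ + Pi.single i 1) (ρ + Pi.single i 1) *
        ‖a (γ + Pi.single i 1) (ρ + Pi.single i 1)‖ ^ 2 := by
  calc _ ≤ lambdaWeight d γ ρ * (n * ((d : ℝ) + 1) ^ 2 *
          ∑ i, (((γ i + 1) * (ρ i + 1) : ℕ) : ℝ) *
            ‖a (γ + Pi.single i 1) (ρ + Pi.single i 1)‖ ^ 2) := by
        gcongr
        · exact (lambdaWeight_pos d γ ρ).le
        · exact norm_laplaceCoeff_sq_le a hγ hρ
    _ = _ := by
        simp only [mul_sum]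
        refine sum_congr rfl fun i _ => ?_
        linear_combination (n * ((d : ℝ) + 1) ^ 2 *
          ‖a (γ + Pi.single i 1) (ρ + Pi.single i 1)‖ ^ 2) * lambdaWeight_mul_succ_mul_succ d γ ρ i

theorem lambdaSq_laplaceCoeff_le (d : ℕ) (a : (Fin n → ℕ) → (Fin n → ℕ) → ℂ) :
    lambdaSq d (laplaceCoeff a) ≤ ((n : ℝ) * ((d : ℝ) + 1) ^ 2) ^ 2 * lambdaSq (d + 1) a := by
  set g : (Fin n → ℕ) → (Fin n → ℕ) → ℝ := fun α β => lambdaWeight (d + 1) α β * ‖a α β‖ ^ 2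
  have hg : ∀ α β, 0 ≤ g α β := fun α β => mul_nonneg (lambdaWeight_pos ..).le (sq_nonneg _)
  have hshift : ∀ i, ∑ γ ∈ Nat.antidiagonalTuple n d, ∑ ρ ∈ Nat.antidiagonalTuple n d,
      g (γ + Pi.single i 1) (ρ + Pi.single i 1) ≤ lambdaSq (d + 1) a := fun i =>
    calc _ ≤ ∑ γ ∈ Nat.antidiagonalTuple n d, ∑ β ∈ Nat.antidiagonalTuple n (d + 1),
          g (γ + Pi.single i 1) β :=
          sum_le_sum fun γ _ => Nat.sum_antidiagonalTuple_add_single_le d i fun ρ => hg _ _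
      _ ≤ lambdaSq (d + 1) a :=
          Nat.sum_antidiagonalTuple_add_single_le d i fun α => sum_nonneg fun β _ => hg α β
  calc lambdaSq d (laplaceCoeff a)
      ≤ ∑ γ ∈ Nat.antidiagonalTuple n d, ∑ ρ ∈ Nat.antidiagonalTuple n d,
          n * ((d : ℝ) + 1) ^ 4 * ∑ i, g (γ + Pi.single i 1) (ρ + Pi.single i 1) :=
        sum_le_sum fun γ hγ => sum_le_sum fun ρ hρ =>
          lambdaWeight_mul_norm_laplaceCoeff_sq_le a hγ hρ
    _ = n * ((d : ℝ) + 1) ^ 4 * ∑ i, ∑ γ ∈ Nat.antidiagonalTuple n d,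
          ∑ ρ ∈ Nat.antidiagonalTuple n d, g (γ + Pi.single i 1) (ρ + Pi.single i 1) := by
        simp_rw [← mul_sum, sum_comm (s := Nat.antidiagonalTuple n d) (t := univ)]
    _ ≤ n * ((d : ℝ) + 1) ^ 4 * ∑ _i : Fin n, lambdaSq (d + 1) a := by
        gcongr with i
        exact hshift i
    _ = _ := by
        rw [sum_const, Finset.card_univ, Fintype.card_fin, nsmul_eq_mul]
        ring

theorem lambdaSq_iterate_laplaceCoeff_le (k d : ℕ) (a : (Fin n → ℕ) → (Fin n → ℕ) → ℂ) :
    lambdaSq d (laplaceCoeff^[k] a)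
      ≤ (((n : ℝ) * ((d + k : ℕ) : ℝ) ^ 2) ^ k) ^ 2 * lambdaSq (d + k) a := by
  induction k generalizing d with
  | zero => simp
  | succ k ih =>
    have hd : (d : ℝ) + 1 ≤ ((d + (k + 1) : ℕ) : ℝ) := by push_cast; linarith
    rw [Function.iterate_succ_apply']
    calc lambdaSq d (laplaceCoeff (laplaceCoeff^[k] a))
        ≤ ((n : ℝ) * ((d : ℝ) + 1) ^ 2) ^ 2 * lambdaSq (d + 1) (laplaceCoeff^[k] a) :=
          lambdaSq_laplaceCoeff_le d _
      _ ≤ ((n : ℝ) * ((d : ℝ) + 1) ^ 2) ^ 2 *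
          ((((n : ℝ) * ((d + (k + 1) : ℕ) : ℝ) ^ 2) ^ k) ^ 2 * lambdaSq (d + (k + 1)) a) := by
          gcongr
          have := ih (d + 1)
          rwa [Nat.add_right_comm d 1 k] at this
      _ ≤ ((n : ℝ) * ((d + (k + 1) : ℕ) : ℝ) ^ 2) ^ 2 *
          ((((n : ℝ) * ((d + (k + 1) : ℕ) : ℝ) ^ 2) ^ k) ^ 2 * lambdaSq (d + (k + 1)) a) := by
          have := lambdaSq_nonneg (d + (k + 1)) a
          gcongr
      _ = _ := by ring

theorem norm_sum_mul_monomial_le_sqrt_lambdaSq (d : ℕ) (a : (Fin n → ℕ) → (Fin n → ℕ) → ℂ)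
    {z : Fin n → ℂ} (hz : ∑ i, ‖z i‖ ^ 2 = 1) :
    ‖∑ γ ∈ Nat.antidiagonalTuple n d, ∑ ρ ∈ Nat.antidiagonalTuple n d,
        a γ ρ * (∏ i, z i ^ γ i) * ∏ i, conj (z i) ^ ρ i‖ ≤ √(lambdaSq d a) := by
  set P : (Fin n → ℕ) → ℝ := fun γ => ∏ i, ‖z i‖ ^ γ i
  set M : (Fin n → ℕ) → ℝ := fun γ => (d ! : ℝ) / (∏ i, ((γ i)! : ℝ)) * P γ ^ 2
  have hM : ∑ γ ∈ Nat.antidiagonalTuple n d, M γ = 1 := by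
    have hmult := Nat.sum_pow_eq_sum_antidiagonalTuple n d (fun i => ‖z i‖ ^ 2)
    rw [hz, one_pow] at hmult
    rw [hmult]
    refine sum_congr rfl fun γ _ => ?_
    simp only [M, P, ← prod_pow]
    exact congrArg _ (prod_congr rfl fun i _ => by ring)
  have htri : ‖∑ γ ∈ Nat.antidiagonalTuple n d, ∑ ρ ∈ Nat.antidiagonalTuple n d,
        a γ ρ * (∏ i, z i ^ γ i) * ∏ i, conj (z i) ^ ρ i‖
      ≤ ∑ γ ∈ Nat.antidiagonalTuple n d, ∑ ρ ∈ Nat.antidiagonalTuple n d,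
        ‖a γ ρ‖ * P γ * P ρ := by
    refine (norm_sum_le _ _).trans (sum_le_sum fun γ _ =>
      (norm_sum_le _ _).trans_eq (sum_congr rfl fun ρ _ => ?_))
    simp [P, norm_prod]
  have hCS : (∑ γ ∈ Nat.antidiagonalTuple n d, ∑ ρ ∈ Nat.antidiagonalTuple n d,
        ‖a γ ρ‖ * P γ * P ρ) ^ 2
      ≤ lambdaSq d a * ∑ γ ∈ Nat.antidiagonalTuple n d, ∑ ρ ∈ Nat.antidiagonalTuple n d,
        M γ * M ρ := by
    simp only [lambdaSq, ← sum_product']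
    refine sum_sq_le_sum_mul_sum_of_sq_le_mul _ (fun p _ => ?_) (fun p _ => ?_) fun p _ => ?_
    · exact mul_nonneg (lambdaWeight_pos ..).le (sq_nonneg _)
    · positivity
    · refine le_of_eq ?_
      simp only [lambdaWeight, M]
      field_simp
  rw [← sum_mul_sum, hM, mul_one, mul_one] at hCS
  exact htri.trans ((le_abs_self _).trans (Real.abs_le_sqrt hCS))

end BihomogeneousForm

open BihomogeneousForm

theorem iterated_laplacian_sup_bound_general (n m : ℕ)
    (c : (Fin n → ℕ) → (Fin n → ℕ) → ℂ)
    (j : ℕ) (hj : j ≤ m)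
    (cs : ℕ → (Fin n → ℕ) → (Fin n → ℕ) → ℂ)
    (hcs0 : cs 0 = c)
    (hcsrec : ∀ k, ∀ γ ρ : Fin n → ℕ, cs (k + 1) γ ρ
        = ∑ i, (((γ i + 1) * (ρ i + 1) : ℕ) : ℂ)
            * cs k (fun l => γ l + if l = i then 1 else 0) (fun l => ρ l + if l = i then 1 else 0))
    (z : Fin n → ℂ) (hz : ∑ i, ‖z i‖ ^ 2 = 1) :
    ‖∑ γ ∈ Finset.Nat.antidiagonalTuple n (m - j), ∑ ρ ∈ Finset.Nat.antidiagonalTuple n (m - j),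
        cs j γ ρ * (∏ i, z i ^ γ i) * (∏ i, (starRingEnd ℂ) (z i) ^ ρ i)‖
      ≤ ((n : ℝ) * (m : ℝ) ^ 2) ^ j *
        Real.sqrt (∑ α ∈ Finset.Nat.antidiagonalTuple n m,
          ∑ β ∈ Finset.Nat.antidiagonalTuple n m,
            ((∏ i, (Nat.factorial (α i) : ℝ)) * (∏ i, (Nat.factorial (β i) : ℝ))
                / (Nat.factorial m : ℝ) ^ 2) * ‖c α β‖ ^ 2) := by
  have hcs : ∀ k, cs k = laplaceCoeff^[k] c := by
    intro k
    induction k with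
    | zero => exact hcs0
    | succ k ih =>
      funext γ ρ
      simp only [hcsrec, ih, Function.iterate_succ_apply', laplaceCoeff, Pi.add_def,
        Pi.single_apply]
  have hm : m - j + j = m := Nat.sub_add_cancel hj
  calc _ ≤ √(lambdaSq (m - j) (cs j)) := norm_sum_mul_monomial_le_sqrt_lambdaSq _ _ hz
    _ ≤ √((((n : ℝ) * (m : ℝ) ^ 2) ^ j) ^ 2 * lambdaSq m c) := by
        gcongr
        simpa only [hcs, hm] using lambdaSq_iterate_laplaceCoeff_le j (m - j) c
    _ = _ := by
        rw [Real.sqrt_mul (by positivity), Real.sqrt_sq (by positivity)]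
        rfl

theorem iterated_laplacian_sup_bound (n m : ℕ)
    (c : (Fin n → ℕ) → (Fin n → ℕ) → ℂ)
    (hherm : ∀ α ∈ Finset.Nat.antidiagonalTuple n m, ∀ β ∈ Finset.Nat.antidiagonalTuple n m,
      (starRingEnd ℂ) (c α β) = c β α)
    (j : ℕ) (hj : j ≤ m)
    (cs : ℕ → (Fin n → ℕ) → (Fin n → ℕ) → ℂ)
    (hcs0 : cs 0 = c)
    (hcsrec : ∀ k, ∀ γ ρ : Fin n → ℕ, cs (k + 1) γ ρ
        = ∑ i, (((γ i + 1) * (ρ i + 1) : ℕ) : ℂ)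
            * cs k (fun l => γ l + if l = i then 1 else 0) (fun l => ρ l + if l = i then 1 else 0))
    (z : Fin n → ℂ) (hz : ∑ i, ‖z i‖ ^ 2 = 1) :
    ‖∑ γ ∈ Finset.Nat.antidiagonalTuple n (m - j), ∑ ρ ∈ Finset.Nat.antidiagonalTuple n (m - j),
        cs j γ ρ * (∏ i, z i ^ γ i) * (∏ i, (starRingEnd ℂ) (z i) ^ ρ i)‖
      ≤ ((n : ℝ) * (m : ℝ) ^ 2) ^ j *
        Real.sqrt (∑ α ∈ Finset.Nat.antidiagonalTuple n m,
          ∑ β ∈ Finset.Nat.antidiagonalTuple n m,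
            ((∏ i, (Nat.factorial (α i) : ℝ)) * (∏ i, (Nat.factorial (β i) : ℝ))
                / (Nat.factorial m : ℝ) ^ 2) * ‖c α β‖ ^ 2) :=
  iterated_laplacian_sup_bound_general n m c j hj cs hcs0 hcsrec z hz
end
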